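/- arXiv:2602.22633 — 2 statements merged into one kernel-verified Lean document; each statement's English description precedes it below -/
import Mathlib

section
/- Suppose a nonnegative sequence e_t satisfies e_{t+1} ≤ (1 − (2Cμ/(B))·α_t)·e_t + α_t²·K + α_t·M for all t ≥ 1, where α_t = β/(γ+t) with β ≥ B/(Cμ) and γ ≥ 1, and K, M ≥ 0. Then for all T ≥ 1: e_{T+1} ≤ (γ/(γ+T))·e_1 + (β²T/(γ+T)²)·K + (βT/(γ+T))·M. -/
/-!
Since `β ≥ B / (C μ)`, the contraction factor `1 - (2Cμ/B) α_t` is at most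
`1 - 2/(γ+t) = (γ+t-2)/(γ+t)`. With this factor the claimed bound, started at `T = 0` where it
reads `e₁ ≤ e₁`, is an invariant of the recursion: one step multiplies each coefficient by a factor
`ρ = (s-1)/(s+1)` (with `s = γ+T`), and `ρ/s ≤ 1/(s+1)`, `ρ/s² ≤ 1/(s+1)²` leave room for the new
noise terms `β²/(s+1)² K` and `β/(s+1) M`.
-/

noncomputable def unrolledBound (γ β K M e₁ T : ℝ) : ℝ :=
  γ / (γ + T) * e₁ + β ^ 2 * T / (γ + T) ^ 2 * K + β * T / (γ + T) * M

lemma two_le_rate_mul {C μ B β : ℝ} (hC : 0 < C) (hμ : 0 < μ) (hB : 0 < B)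
    (hβ : B / (C * μ) ≤ β) : 2 ≤ 2 * C * μ / B * β := by
  rw [div_le_iff₀ (mul_pos hC hμ)] at hβ
  rw [div_mul_eq_mul_div, le_div_iff₀ hB]
  linarith

lemma one_sub_mul_div_le_one_sub_two_div {c β s : ℝ} (hs : 0 < s) (h : 2 ≤ c * β) :
    1 - c * (β / s) ≤ 1 - 2 / s := by
  rw [← mul_div_assoc]
  gcongr

lemma unrolledBound_succ {γ β K M e₁ T x : ℝ} (hγ : 1 ≤ γ) (hβ : 0 ≤ β) (hT : 0 ≤ T)
    (he₁ : 0 ≤ e₁) (hK : 0 ≤ K) (hM : 0 ≤ M) (hx : x ≤ unrolledBound γ β K M e₁ T) :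
    (1 - 2 / (γ + (T + 1))) * x + (β / (γ + (T + 1))) ^ 2 * K + β / (γ + (T + 1)) * M ≤
      unrolledBound γ β K M e₁ (T + 1) := by
  set s := γ + T with hs_def
  have hs : 1 ≤ s := by linarith
  have hρ : 1 - 2 / (γ + (T + 1)) = (s - 1) / (s + 1) := by
    rw [← add_assoc, ← hs_def]
    field_simp
    ring
  have hρ_nonneg : 0 ≤ (s - 1) / (s + 1) := by
    apply div_nonneg <;> linarith
  have hρ_div : (s - 1) / (s + 1) / s ≤ 1 / (s + 1) := by
    rw [div_div, div_le_div_iff₀ (by positivity) (by positivity)]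
    nlinarith
  have hρ_div_sq : (s - 1) / (s + 1) / s ^ 2 ≤ 1 / (s + 1) ^ 2 := by
    rw [div_div, div_le_div_iff₀ (by positivity) (by positivity)]
    nlinarith
  rw [hρ, ← add_assoc, ← hs_def]
  calc (s - 1) / (s + 1) * x + (β / (s + 1)) ^ 2 * K + β / (s + 1) * M
      ≤ (s - 1) / (s + 1) * unrolledBound γ β K M e₁ T + (β / (s + 1)) ^ 2 * K +
          β / (s + 1) * M := by gcongr
    _ = (s - 1) / (s + 1) / s * γ * e₁ + ((s - 1) / (s + 1) / s ^ 2 * (β ^ 2 * T) +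
          1 / (s + 1) ^ 2 * β ^ 2) * K + ((s - 1) / (s + 1) / s * (β * T) + 1 / (s + 1) * β) * M := by
        have : s ≠ 0 := by positivity
        simp only [unrolledBound, ← hs_def]
        field_simp
        ring
    _ ≤ 1 / (s + 1) * γ * e₁ + (1 / (s + 1) ^ 2 * (β ^ 2 * T) + 1 / (s + 1) ^ 2 * β ^ 2) * K +
          (1 / (s + 1) * (β * T) + 1 / (s + 1) * β) * M := by gcongr
    _ = unrolledBound γ β K M e₁ (T + 1) := by
        simp only [unrolledBound, ← add_assoc, ← hs_def]
        ring

theorem recursion_unrolling (C μ B β γ K M : ℝ)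
    (hC : 0 < C) (hμ : 0 < μ) (hB : 0 < B) (hγ : 1 ≤ γ)
    (hβ : B / (C * μ) ≤ β) (hK : 0 ≤ K) (hM : 0 ≤ M)
    (e : ℕ → ℝ) (he : ∀ t, 0 ≤ e t)
    (hrec : ∀ t : ℕ, 1 ≤ t →
      e (t + 1) ≤ (1 - (2 * C * μ / B) * (β / (γ + t))) * e t +
        (β / (γ + t)) ^ 2 * K + (β / (γ + t)) * M) :
    ∀ T : ℕ, 1 ≤ T →
      e (T + 1) ≤ (γ / (γ + T)) * e 1 + (β ^ 2 * T / (γ + T) ^ 2) * K +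
        (β * T / (γ + T)) * M := by
  have hrate := two_le_rate_mul hC hμ hB hβ
  have hβ₀ : 0 ≤ β := (div_pos hB (mul_pos hC hμ)).le.trans hβ
  have hbound : ∀ T : ℕ, e (T + 1) ≤ unrolledBound γ β K M (e 1) T := by
    intro T
    induction T with
    | zero => simp [unrolledBound, (by positivity : γ ≠ 0)]
    | succ n ih =>
      have hstep := hrec (n + 1) (by omega)
      push_cast at hstep ⊢
      refine hstep.trans (le_trans ?_ (unrolledBound_succ hγ hβ₀ n.cast_nonneg (he 1) hK hM ih))
      gcongr ?_ * _ + _ + _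
      · exact he _
      · exact one_sub_mul_div_le_one_sub_two_div (by positivity) hrate
  exact fun T _ => hbound T
end

section
/- At any optimal solution p^s of the problem: minimize ‖p − q‖₁ + sqrt(‖p − q‖₁² + Σ_k p_k² c_k) subject to Σ_k p_k = 1 and p_k ≥ 0, where q is a probability vector with q_k > 0 for all k and c_k > 0, every coordinate satisfies p^s_k > 0. -/
/-!
If an optimal `p` had `p k = 0`, then, since `∑ p = ∑ q` and `q k > 0`, some `j` has
`p j > q j`. Moving a small mass `ε` from `j` to `k` brings both coordinates closer to `q`, so
`‖p - q‖₁` drops by `2ε`, while for `ε` small the weighted sum `∑ p_i² c_i` does not increase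
(its derivative in the direction of the move is `-2 p_j c_j < 0`). The objective
`s + √(s² + t)` is strictly increasing in `s ≥ 0` and monotone in `t`, contradicting optimality.
-/

open Filter Topology

section MoveMass

variable {ι : Type*} [DecidableEq ι]

def moveMass (p : ι → ℝ) (j k : ι) (ε : ℝ) : ι → ℝ :=
  p + Pi.single k ε - Pi.single j ε

variable {p : ι → ℝ} {j k : ι} {ε : ℝ}

lemma moveMass_apply_source (hjk : j ≠ k) : moveMass p j k ε j = p j - ε := by
  simp [moveMass, hjk]

lemma moveMass_apply_target (hjk : j ≠ k) : moveMass p j k ε k = p k + ε := by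
  simp [moveMass, hjk.symm]

lemma moveMass_apply_of_ne {i : ι} (hij : i ≠ j) (hik : i ≠ k) :
    moveMass p j k ε i = p i := by
  simp [moveMass, hij, hik]

lemma sum_moveMass [Fintype ι] : ∑ i, moveMass p j k ε i = ∑ i, p i := by
  simp [moveMass, Finset.sum_add_distrib, Finset.sum_sub_distrib]

lemma moveMass_nonneg (hp : ∀ i, 0 ≤ p i) (hε : 0 ≤ ε) (hεj : ε ≤ p j) (i : ι) :
    0 ≤ moveMass p j k ε i := by
  have hk : 0 ≤ (Pi.single k ε : ι → ℝ) i := by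
    rcases eq_or_ne i k with rfl | hik <;> simp [*]
  rcases eq_or_ne i j with rfl | hij
  · simp only [moveMass, Pi.add_apply, Pi.sub_apply, Pi.single_eq_same]
    linarith
  · simpa [moveMass, hij] using add_nonneg (hp i) hk

lemma sum_comp_moveMass [Fintype ι] (f : ι → ℝ → ℝ) (hjk : j ≠ k) :
    ∑ i, f i (moveMass p j k ε i) =
      ∑ i, f i (p i) + (f j (p j - ε) - f j (p j)) + (f k (p k + ε) - f k (p k)) := by
  have hdiff : ∑ i, (f i (moveMass p j k ε i) - f i (p i)) =
      (f j (p j - ε) - f j (p j)) + (f k (p k + ε) - f k (p k)) := by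
    rw [Fintype.sum_eq_add j k hjk fun i ⟨hij, hik⟩ => by
        rw [moveMass_apply_of_ne hij hik, sub_self],
      moveMass_apply_source hjk, moveMass_apply_target hjk]
  rw [Finset.sum_sub_distrib] at hdiff
  linarith

lemma sum_abs_moveMass_sub [Fintype ι] (q : ι → ℝ) (hjk : j ≠ k) (hε : 0 ≤ ε)
    (hj : q j + ε ≤ p j) (hk : p k + ε ≤ q k) :
    ∑ i, |moveMass p j k ε i - q i| = ∑ i, |p i - q i| - 2 * ε := by
  rw [sum_comp_moveMass (fun i x => |x - q i|) hjk,
    abs_of_nonneg (by linarith : 0 ≤ p j - ε - q j), abs_of_nonneg (by linarith : 0 ≤ p j - q j),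
    abs_of_nonpos (by linarith : p k + ε - q k ≤ 0), abs_of_nonpos (by linarith : p k - q k ≤ 0)]
  ring

lemma sum_sq_mul_moveMass_le [Fintype ι] (c : ι → ℝ) (hjk : j ≠ k) (hε : 0 ≤ ε)
    (hsmall : ε * (c j + c k) ≤ 2 * (p j * c j - p k * c k)) :
    ∑ i, moveMass p j k ε i ^ 2 * c i ≤ ∑ i, p i ^ 2 * c i := by
  rw [sum_comp_moveMass (fun i x => x ^ 2 * c i) hjk]
  nlinarith [mul_nonneg hε (sub_nonneg.2 hsmall)]

end MoveMass

lemma exists_lt_of_sum_eq_of_lt {ι : Type*} [Fintype ι] {p q : ι → ℝ}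
    (hsum : ∑ i, p i = ∑ i, q i) {k : ι} (hk : p k < q k) : ∃ j, q j < p j := by
  by_contra! h
  exact (Finset.sum_lt_sum (fun i _ => h i) ⟨k, Finset.mem_univ k, hk⟩).ne hsum

lemma add_sqrt_sq_add_lt_add_sqrt_sq_add {s s' t t' : ℝ} (hs' : 0 ≤ s') (hs : s' < s)
    (ht : t' ≤ t) : s' + √(s' ^ 2 + t') < s + √(s ^ 2 + t) := by
  have hsq : s' ^ 2 ≤ s ^ 2 := pow_le_pow_left₀ hs' hs.le 2
  linarith [Real.sqrt_le_sqrt (by linarith : s' ^ 2 + t' ≤ s ^ 2 + t)]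

theorem full_participation {N : ℕ} (q c : Fin N → ℝ)
    (hq : ∀ k, 0 < q k) (hqsum : ∑ k, q k = 1) (hc : ∀ k, 0 < c k)
    (p : Fin N → ℝ)
    (hfeas : (∑ k, p k) = 1 ∧ ∀ k, 0 ≤ p k)
    (hopt : ∀ p' : Fin N → ℝ, ((∑ k, p' k) = 1 ∧ ∀ k, 0 ≤ p' k) →
      (∑ k, |p k - q k|) +
          Real.sqrt ((∑ k, |p k - q k|) ^ 2 + ∑ k, (p k) ^ 2 * c k) ≤
        (∑ k, |p' k - q k|) +
          Real.sqrt ((∑ k, |p' k - q k|) ^ 2 + ∑ k, (p' k) ^ 2 * c k)) :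
    ∀ k, 0 < p k := by
  obtain ⟨hsum, hpos⟩ := hfeas
  intro k
  by_contra! hk
  have hpk : p k = 0 := le_antisymm hk (hpos k)
  obtain ⟨j, hj⟩ := exists_lt_of_sum_eq_of_lt (hsum.trans hqsum.symm) (hpk ▸ hq k)
  have hjk : j ≠ k := by rintro rfl; linarith [hq j]
  have hsmall : ∀ᶠ ε in 𝓝[>] (0 : ℝ),
      0 < ε ∧ ε ≤ p j - q j ∧ ε ≤ q k ∧ ε * (c j + c k) ≤ 2 * (p j * c j - p k * c k) := by
    have hlin : Tendsto (fun ε : ℝ => ε * (c j + c k)) (𝓝 0) (𝓝 0) :=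
      (continuous_mul_const _).tendsto' 0 0 (zero_mul _)
    refine eventually_mem_nhdsWithin.and (nhdsWithin_le_nhds ?_)
    refine (eventually_le_nhds (sub_pos.2 hj)).and ((eventually_le_nhds (hq k)).and ?_)
    exact hlin.eventually_le_const (by rw [hpk]; nlinarith [hq j, hc j])
  obtain ⟨ε, hε, hεj, hεk, hεc⟩ := hsmall.exists
  have hmove := hopt (moveMass p j k ε)
    ⟨sum_moveMass.trans hsum, moveMass_nonneg hpos hε.le (by linarith [hq j])⟩
  have hdist := sum_abs_moveMass_sub (p := p) q hjk hε.le (by linarith) (by linarith)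
  exact hmove.not_gt <| add_sqrt_sq_add_lt_add_sqrt_sq_add
    (Finset.sum_nonneg fun i _ => abs_nonneg _) (by linarith)
    (sum_sq_mul_moveMass_le c hjk hε.le hεc)
end
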